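/- Let T > 0, let ρ ∈ ℝ with ρ² < 1, let θ : [0, T] → ℝ be continuous, and let u : [0, T] → ℝ be a function with u(t) > 0 for all t ∈ [0, T] that satisfies the implicit relation (1 − ρ²)/u(t) − ρ²·log u(t) = 1 − ρ² + ∫_t^T θ(s)² ds for every t ∈ [0, T]. Then u(T) = 1 and, at every t ∈ [0, T], u is differentiable with derivative u′(t) = θ(t)² u(t)² / (1 − ρ² + ρ² u(t)). -/

import Mathlib

open Set intervalIntegral Filter Topology

/-! The left-hand side `Φ(y) = (1 - ρ²)/y - ρ² log y` of the relation is strictly decreasing on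
`(0, ∞)` with nonvanishing derivative `-(1 - ρ² + ρ² y)/y²`, so it has a differentiable local
inverse there. The relation reads `Φ ∘ u = g` with `g(t) = 1 - ρ² + ∫_t^T θ²`, hence `u` agrees
with that local inverse composed with `g` near each point, and the chain rule together with
`g′ = -θ²` gives the ODE. At `t = T` the integral vanishes and `Φ(u T) = 1 - ρ² = Φ(1)`. -/

/-- The paper's `ν(ρ, ·)` is the inverse of `Φ ρ` on `(0, ∞)`. -/
noncomputable def Φ (ρ y : ℝ) : ℝ := (1 - ρ ^ 2) / y - ρ ^ 2 * Real.log y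

theorem Φ_one (ρ : ℝ) : Φ ρ 1 = 1 - ρ ^ 2 := by
  simp [Φ]

theorem strictAntiOn_Φ {ρ : ℝ} (hρ : ρ ^ 2 < 1) : StrictAntiOn (Φ ρ) (Ioi 0) := by
  intro x hx y _ hxy
  have hinv : (1 - ρ ^ 2) / y < (1 - ρ ^ 2) / x := div_lt_div_of_pos_left (by linarith) hx hxy
  have hlog : ρ ^ 2 * Real.log x ≤ ρ ^ 2 * Real.log y :=
    mul_le_mul_of_nonneg_left (Real.log_le_log hx hxy.le) (sq_nonneg ρ)
  simp only [Φ]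
  linarith

theorem hasStrictDerivAt_Φ (ρ : ℝ) {y : ℝ} (hy : 0 < y) :
    HasStrictDerivAt (Φ ρ) (-(1 - ρ ^ 2 + ρ ^ 2 * y) / y ^ 2) y := by
  have hinv : HasStrictDerivAt (fun y : ℝ => (1 - ρ ^ 2) / y) ((1 - ρ ^ 2) * -(y ^ 2)⁻¹) y := by
    simpa [div_eq_mul_inv] using (hasStrictDerivAt_inv hy.ne').const_mul (1 - ρ ^ 2)
  refine (hinv.sub ((Real.hasStrictDerivAt_log hy.ne').const_mul (ρ ^ 2))).congr_deriv ?_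
  field_simp
  ring

/-- No continuity of `u` is needed: injectivity of `F` on `S` identifies `u` near `t` with the
local inverse of `F` composed with `g`. -/
theorem HasStrictDerivAt.hasDerivWithinAt_of_comp_eqOn {F u g : ℝ → ℝ} {S s : Set ℝ}
    {t F' g' : ℝ} (hF : HasStrictDerivAt F F' (u t)) (hF' : F' ≠ 0) (hS : S ∈ 𝓝 (u t))
    (hinj : InjOn F S) (hus : MapsTo u s S) (hFu : EqOn (F ∘ u) g s) (ht : t ∈ s)
    (hg : HasDerivWithinAt g g' s t) : HasDerivWithinAt u (F'⁻¹ * g') s t := by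
  set G := (hF.hasStrictFDerivAt_equiv hF').localInverse F _ (u t)
  have hG : HasStrictDerivAt G F'⁻¹ (F (u t)) := hF.to_localInverse hF'
  have hGF : G (F (u t)) = u t := (hF.hasStrictFDerivAt_equiv hF').localInverse_apply_image
  have hgt : g t = F (u t) := (hFu ht).symm
  have hg_tendsto : Tendsto g (𝓝[s] t) (𝓝 (F (u t))) := hgt ▸ hg.continuousWithinAt
  have hGS : ∀ᶠ y in 𝓝 (F (u t)), G y ∈ S :=
    hG.hasDerivAt.continuousAt.preimage_mem_nhds (by rwa [hGF])
  have hu_eq : u =ᶠ[𝓝[s] t] G ∘ g := by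
    filter_upwards [hg_tendsto.eventually (hF.hasStrictFDerivAt_equiv hF').eventually_right_inverse,
      hg_tendsto.eventually hGS, self_mem_nhdsWithin] with x hFG hGx hx
    exact hinj (hus hx) hGx ((hFu hx).trans hFG.symm)
  refine ((hgt ▸ hG.hasDerivAt).comp_hasDerivWithinAt t hg).congr_of_eventuallyEq hu_eq ?_
  simp [hgt, hGF]

theorem ContinuousOn.hasDerivWithinAt_integral_left {f : ℝ → ℝ} {a b c t : ℝ}
    (hf : ContinuousOn f (Icc a b)) (hc : c ∈ Icc a b) (ht : t ∈ Icc a b) :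
    HasDerivWithinAt (fun s => ∫ x in s..c, f x) (-f t) (Icc a b) t := by
  have : Fact (t ∈ Icc a b) := ⟨ht⟩
  exact integral_hasDerivWithinAt_left
    ((hf.mono (uIcc_subset_Icc ht hc)).intervalIntegrable)
    (hf.stronglyMeasurableAtFilter_nhdsWithin measurableSet_Icc t) (hf t ht)

/-- If `u > 0` on `[0, T]` satisfies the implicit relation
`(1 − ρ²)/u(t) − ρ² log u(t) = 1 − ρ² + ∫_t^T θ(s)² ds` on `[0, T]` (with
`ρ² < 1` and `θ` continuous), then `u(T) = 1` and `u` solves the terminal-value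
ODE `u′(t) = θ(t)² u(t)² / (1 − ρ² + ρ² u(t))` on `[0, T]`. -/
theorem implicit_relation_solves_value_ODE
    (T : ℝ) (hT : 0 < T) (ρ : ℝ) (hρ : ρ ^ 2 < 1)
    (θ : ℝ → ℝ) (hθ : ContinuousOn θ (Icc 0 T))
    (u : ℝ → ℝ) (hu : ∀ t ∈ Icc 0 T, 0 < u t)
    (hrel : ∀ t ∈ Icc 0 T,
      (1 - ρ ^ 2) / u t - ρ ^ 2 * Real.log (u t) =
        1 - ρ ^ 2 + ∫ s in t..T, (θ s) ^ 2) :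
    u T = 1 ∧
      ∀ t ∈ Icc 0 T,
        HasDerivWithinAt u ((θ t) ^ 2 * (u t) ^ 2 / (1 - ρ ^ 2 + ρ ^ 2 * u t))
          (Icc 0 T) t := by
  have hΦ_inj : InjOn (Φ ρ) (Ioi 0) := (strictAntiOn_Φ hρ).injOn
  have hT_mem : T ∈ Icc 0 T := right_mem_Icc.2 hT.le
  refine ⟨hΦ_inj (hu T hT_mem) (mem_Ioi.2 one_pos) ?_, fun t ht => ?_⟩
  · exact (hrel T hT_mem).trans (by simp [Φ_one])
  have hut : 0 < u t := hu t ht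
  have hA : 0 < 1 - ρ ^ 2 + ρ ^ 2 * u t := by nlinarith [sq_nonneg ρ]
  have hg : HasDerivWithinAt (fun s => 1 - ρ ^ 2 + ∫ x in s..T, θ x ^ 2) (-θ t ^ 2) (Icc 0 T) t :=
    ((hθ.pow 2).hasDerivWithinAt_integral_left hT_mem ht).const_add _
  convert (hasStrictDerivAt_Φ ρ hut).hasDerivWithinAt_of_comp_eqOn
    (div_ne_zero (neg_ne_zero.2 hA.ne') (by positivity)) (Ioi_mem_nhds hut) hΦ_inj hu hrel ht hg
    using 1
  field_simp
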